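/- Let V be a real vector space of dimension 4n (n ≥ 1) with a paraquaternionic triple (J₁, J₂, J₃), and let F be an ℝ-linear endomorphism of V such that the commutator [F, Jₐ] lies in the linear span of {J₁, J₂, J₃} for a = 1, 2, 3. Then F decomposes uniquely as F = F' + (1/2n)(ρ₁·J₁ + ρ₂·J₂ + ρ₃·J₃), where F' commutes with J₁, J₂ and J₃ and ρ₁, ρ₂, ρ₃ are real numbers; moreover ρ₁ = (1/2)·tr(J₁∘F), ρ₂ = (1/2)·tr(J₂∘F) and ρ₃ = −(1/2)·tr(J₃∘F). (This is the pointwise content of Proposition 2.1: the curvature of a para-quaternionic connection splits into a gl(n,H̃)-valued part and an sp(1,ℝ)-valued part determined by the three Ricci 2-forms.) -/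

import Mathlib

/-!
Each `Jₐ` is invertible and anticommutes with the other two, so conjugating by a suitable `J_b`
shows `tr (Jₐ * G) = 0` whenever `G` commutes with the triple; moreover `tr (Jₐ * J_b) = 0` for
`a ≠ b` and `tr (J₁²) = tr (J₂²) = -tr (J₃²) = dim V = 4n`. So in any splitting the `ρₐ` are
read off from the `tr (Jₐ * F)`, which gives the trace formulas and uniqueness.

For existence, let `S` be the projection of `F` to `span {J₁, J₂, J₃}` orthogonal for the trace
form. The span is closed under commutators and `tr (J_b * [X, Jₐ]) = tr ([Jₐ, J_b] * X)`, so
`[F, Jₐ]` and `[S, Jₐ]` are elements of the span with the same traces against it. The trace form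
is nondegenerate on the span, hence they are equal: `F - S` commutes with every `Jₐ`.
-/

open LinearMap (trace)
open Module (finrank)

section Trace

variable {R M : Type*} [CommRing R] [AddCommGroup M] [Module R M]

theorem LinearMap.trace_mul_eq_zero_of_anticommute [IsAddTorsionFree R]
    {X K G : Module.End R M} (hK : IsUnit K) (hXK : K * X = -(X * K)) (hGK : Commute G K) :
    trace R M (X * G) = 0 := by
  obtain ⟨u, rfl⟩ := hK
  have hconj : ↑u * (X * G) * ↑u⁻¹ = -(X * G) := by
    rw [← mul_assoc, hXK, neg_mul, mul_assoc X, ← hGK.eq, ← mul_assoc, neg_mul,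
      Units.mul_inv_cancel_right]
  rw [← self_eq_neg, ← map_neg, ← hconj, trace_conj]

theorem LinearMap.trace_mul_commutator (A B X : Module.End R M) :
    trace R M (B * (X * A - A * X)) = trace R M ((A * B - B * A) * X) := by
  rw [mul_sub, sub_mul, map_sub, map_sub, ← mul_assoc, trace_mul_comm R (B * X) A, ← mul_assoc,
    ← mul_assoc]

theorem LinearMap.trace_mul_eq_of_mem_span {s : Set (Module.End R M)} {X Y Z : Module.End R M}
    (hs : ∀ J ∈ s, trace R M (J * X) = trace R M (J * Y)) (hZ : Z ∈ Submodule.span R s) :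
    trace R M (Z * X) = trace R M (Z * Y) := by
  induction hZ using Submodule.span_induction with
  | mem J hJ => exact hs J hJ
  | zero => simp
  | add Z W _ _ hZ hW => rw [add_mul, add_mul, map_add, map_add, hZ, hW]
  | smul c Z _ hZ => rw [smul_mul_assoc, smul_mul_assoc, map_smul, map_smul, hZ]

end Trace

structure IsParaquaternionicTriple {A : Type*} [Ring A] (J₁ J₂ J₃ : A) : Prop where
  sq₁ : J₁ * J₁ = 1
  sq₂ : J₂ * J₂ = 1
  sq₃ : J₃ * J₃ = -1
  mul₁₂ : J₁ * J₂ = J₃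
  mul₂₁ : J₂ * J₁ = -J₃

/-- The `sp(1, ℝ)`-valued part of `F`; for a paraquaternionic triple, the projection of `F` to
`span {J₁, J₂, J₃}` orthogonal for the trace form. -/
noncomputable def sp1Part {𝕜 V : Type*} [Field 𝕜] [AddCommGroup V] [Module 𝕜 V]
    (J₁ J₂ J₃ F : Module.End 𝕜 V) : Module.End 𝕜 V :=
  (finrank 𝕜 V : 𝕜)⁻¹ •
    (trace 𝕜 V (J₁ * F) • J₁ + trace 𝕜 V (J₂ * F) • J₂ - trace 𝕜 V (J₃ * F) • J₃)

theorem sp1Part_mem_span {𝕜 V : Type*} [Field 𝕜] [AddCommGroup V] [Module 𝕜 V]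
    (J₁ J₂ J₃ F : Module.End 𝕜 V) : sp1Part J₁ J₂ J₃ F ∈ Submodule.span 𝕜 {J₁, J₂, J₃} := by
  rw [sp1Part]
  refine Submodule.smul_mem _ _ (Submodule.mem_span_triple.mpr
    ⟨trace 𝕜 V (J₁ * F), trace 𝕜 V (J₂ * F), -trace 𝕜 V (J₃ * F), ?_⟩)
  rw [neg_smul, ← sub_eq_add_neg]

namespace IsParaquaternionicTriple

section Ring

variable {A : Type*} [Ring A] {J₁ J₂ J₃ : A}

theorem mul₃₂ (h : IsParaquaternionicTriple J₁ J₂ J₃) : J₃ * J₂ = J₁ := by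
  rw [← h.mul₁₂, mul_assoc, h.sq₂, mul_one]

theorem mul₁₃ (h : IsParaquaternionicTriple J₁ J₂ J₃) : J₁ * J₃ = J₂ := by
  rw [← h.mul₁₂, ← mul_assoc, h.sq₁, one_mul]

theorem mul₂₃ (h : IsParaquaternionicTriple J₁ J₂ J₃) : J₂ * J₃ = -J₁ := by
  rw [← h.mul₁₂, ← mul_assoc, h.mul₂₁, neg_mul, h.mul₃₂]

theorem mul₃₁ (h : IsParaquaternionicTriple J₁ J₂ J₃) : J₃ * J₁ = -J₂ := by
  rw [← h.mul₁₂, mul_assoc, h.mul₂₁, mul_neg, h.mul₁₃]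

theorem isUnit₁ (h : IsParaquaternionicTriple J₁ J₂ J₃) : IsUnit J₁ :=
  ⟨⟨J₁, J₁, h.sq₁, h.sq₁⟩, rfl⟩

theorem isUnit₃ (h : IsParaquaternionicTriple J₁ J₂ J₃) : IsUnit J₃ :=
  ⟨⟨J₃, -J₃, by rw [mul_neg, h.sq₃, neg_neg], by rw [neg_mul, h.sq₃, neg_neg]⟩, rfl⟩

theorem commutator_mem_span {R : Type*} [Ring R] [Module R A]
    (h : IsParaquaternionicTriple J₁ J₂ J₃) {X Y : A} (hX : X ∈ ({J₁, J₂, J₃} : Set A))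
    (hY : Y ∈ ({J₁, J₂, J₃} : Set A)) : X * Y - Y * X ∈ Submodule.span R {J₁, J₂, J₃} := by
  have hJ₁ : J₁ ∈ Submodule.span R {J₁, J₂, J₃} := Submodule.subset_span (by simp)
  have hJ₂ : J₂ ∈ Submodule.span R {J₁, J₂, J₃} := Submodule.subset_span (by simp)
  have hJ₃ : J₃ ∈ Submodule.span R {J₁, J₂, J₃} := Submodule.subset_span (by simp)
  rcases hX with rfl | rfl | rfl <;> rcases hY with rfl | rfl | rfl <;>
    simp only [sub_self, h.mul₁₂, h.mul₂₁, h.mul₁₃, h.mul₃₁, h.mul₂₃, h.mul₃₂, sub_neg_eq_add,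
      Submodule.zero_mem] <;>
    first | exact add_mem ‹_› ‹_› | exact sub_mem (neg_mem ‹_›) ‹_›

theorem commutator_mem_span_of_mem {R : Type*} [CommRing R] [Algebra R A]
    (h : IsParaquaternionicTriple J₁ J₂ J₃) {X Y : A} (hX : X ∈ Submodule.span R {J₁, J₂, J₃})
    (hY : Y ∈ ({J₁, J₂, J₃} : Set A)) : X * Y - Y * X ∈ Submodule.span R {J₁, J₂, J₃} := by
  induction hX using Submodule.span_induction with
  | mem X hX => exact h.commutator_mem_span hX hY
  | zero => simp
  | add X Z _ _ hX hZ =>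
    convert add_mem hX hZ using 1
    noncomm_ring
  | smul c X _ hX =>
    convert Submodule.smul_mem _ c hX using 1
    rw [smul_sub, smul_mul_assoc, mul_smul_comm]

end Ring

section Trace

variable {R M : Type*} [CommRing R] [IsAddTorsionFree R] [AddCommGroup M] [Module R M]
  {J₁ J₂ J₃ : Module.End R M}

theorem trace_mul_eq_zero₁ (h : IsParaquaternionicTriple J₁ J₂ J₃) {G : Module.End R M}
    (hG : Commute G J₃) : trace R M (J₁ * G) = 0 :=
  LinearMap.trace_mul_eq_zero_of_anticommute h.isUnit₃ (by rw [h.mul₃₁, h.mul₁₃]) hG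

theorem trace_mul_eq_zero₂ (h : IsParaquaternionicTriple J₁ J₂ J₃) {G : Module.End R M}
    (hG : Commute G J₃) : trace R M (J₂ * G) = 0 :=
  LinearMap.trace_mul_eq_zero_of_anticommute h.isUnit₃ (by rw [h.mul₃₂, h.mul₂₃, neg_neg]) hG

theorem trace_mul_eq_zero₃ (h : IsParaquaternionicTriple J₁ J₂ J₃) {G : Module.End R M}
    (hG : Commute G J₁) : trace R M (J₃ * G) = 0 :=
  LinearMap.trace_mul_eq_zero_of_anticommute h.isUnit₁ (by rw [h.mul₁₃, h.mul₃₁, neg_neg]) hG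

end Trace

section FiniteDimensional

variable {𝕜 V : Type*} [Field 𝕜] [CharZero 𝕜] [AddCommGroup V] [Module 𝕜 V]
  [FiniteDimensional 𝕜 V] {J₁ J₂ J₃ : Module.End 𝕜 V}

theorem trace_mul_add_smul (h : IsParaquaternionicTriple J₁ J₂ J₃) {G : Module.End 𝕜 V}
    (hG₁ : Commute G J₁) (hG₃ : Commute G J₃) (a b c : 𝕜) :
    trace 𝕜 V (J₁ * (G + (a • J₁ + b • J₂ + c • J₃))) = a * finrank 𝕜 V ∧
    trace 𝕜 V (J₂ * (G + (a • J₁ + b • J₂ + c • J₃))) = b * finrank 𝕜 V ∧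
    trace 𝕜 V (J₃ * (G + (a • J₁ + b • J₂ + c • J₃))) = -(c * finrank 𝕜 V) := by
  have t₁ : trace 𝕜 V J₁ = 0 := by simpa using h.trace_mul_eq_zero₁ (Commute.one_left J₃)
  have t₂ : trace 𝕜 V J₂ = 0 := by simpa using h.trace_mul_eq_zero₂ (Commute.one_left J₃)
  have t₃ : trace 𝕜 V J₃ = 0 := by simpa using h.trace_mul_eq_zero₃ (Commute.one_left J₁)
  simp only [mul_add, mul_smul_comm, map_add, map_smul, smul_eq_mul, h.sq₁, h.sq₂, h.sq₃,
    h.mul₁₂, h.mul₂₁, h.mul₁₃, h.mul₃₁, h.mul₂₃, h.mul₃₂, map_neg, LinearMap.trace_one, t₁, t₂, t₃,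
    h.trace_mul_eq_zero₁ hG₃, h.trace_mul_eq_zero₂ hG₃, h.trace_mul_eq_zero₃ hG₁]
  exact ⟨by ring, by ring, by ring⟩

theorem eq_of_trace_mul_eq (h : IsParaquaternionicTriple J₁ J₂ J₃) (hd : finrank 𝕜 V ≠ 0)
    {X Y : Module.End 𝕜 V} (hX : X ∈ Submodule.span 𝕜 {J₁, J₂, J₃})
    (hY : Y ∈ Submodule.span 𝕜 {J₁, J₂, J₃})
    (hXY : ∀ J ∈ ({J₁, J₂, J₃} : Set (Module.End 𝕜 V)), trace 𝕜 V (J * X) = trace 𝕜 V (J * Y)) :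
    X = Y := by
  obtain ⟨a, b, c, habc⟩ := Submodule.mem_span_triple.mp (sub_mem hX hY)
  obtain ⟨ta, tb, tc⟩ := h.trace_mul_add_smul (Commute.zero_left J₁) (Commute.zero_left J₃) a b c
  simp only [zero_add, habc, mul_sub, map_sub, hXY J₁ (by simp), hXY J₂ (by simp),
    hXY J₃ (by simp), sub_self, zero_eq_neg] at ta tb tc
  have hd' : (finrank 𝕜 V : 𝕜) ≠ 0 := Nat.cast_ne_zero.mpr hd
  rw [← sub_eq_zero, ← habc, (mul_eq_zero_iff_right hd').mp ta.symm,
    (mul_eq_zero_iff_right hd').mp tb.symm, (mul_eq_zero_iff_right hd').mp tc]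
  simp

theorem commute_sub_of_trace_mul_eq (h : IsParaquaternionicTriple J₁ J₂ J₃)
    (hd : finrank 𝕜 V ≠ 0) {F S : Module.End 𝕜 V} (hS : S ∈ Submodule.span 𝕜 {J₁, J₂, J₃})
    (hSF : ∀ J ∈ ({J₁, J₂, J₃} : Set (Module.End 𝕜 V)), trace 𝕜 V (J * S) = trace 𝕜 V (J * F))
    {J : Module.End 𝕜 V} (hJ : J ∈ ({J₁, J₂, J₃} : Set (Module.End 𝕜 V)))
    (hF : F * J - J * F ∈ Submodule.span 𝕜 {J₁, J₂, J₃}) : Commute (F - S) J := by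
  have key : S * J - J * S = F * J - J * F := by
    refine h.eq_of_trace_mul_eq hd (h.commutator_mem_span_of_mem hS hJ) hF fun K hK => ?_
    rw [LinearMap.trace_mul_commutator, LinearMap.trace_mul_commutator]
    exact LinearMap.trace_mul_eq_of_mem_span hSF (h.commutator_mem_span hJ hK)
  have hsplit : (F - S) * J - J * (F - S) = (F * J - J * F) - (S * J - J * S) := by noncomm_ring
  rw [commute_iff_eq, ← sub_eq_zero, hsplit, key, sub_self]

theorem trace_mul_sp1Part (h : IsParaquaternionicTriple J₁ J₂ J₃) (hd : finrank 𝕜 V ≠ 0)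
    (F : Module.End 𝕜 V) :
    ∀ J ∈ ({J₁, J₂, J₃} : Set (Module.End 𝕜 V)),
      trace 𝕜 V (J * sp1Part J₁ J₂ J₃ F) = trace 𝕜 V (J * F) := by
  set d : 𝕜 := (finrank 𝕜 V : 𝕜)
  have hd' : d ≠ 0 := Nat.cast_ne_zero.mpr hd
  have hP : sp1Part J₁ J₂ J₃ F = 0 + ((d⁻¹ * trace 𝕜 V (J₁ * F)) • J₁ +
      (d⁻¹ * trace 𝕜 V (J₂ * F)) • J₂ + (-(d⁻¹ * trace 𝕜 V (J₃ * F))) • J₃) := by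
    rw [sp1Part, zero_add]
    module
  obtain ⟨t₁, t₂, t₃⟩ := h.trace_mul_add_smul (Commute.zero_left J₁) (Commute.zero_left J₃)
    (d⁻¹ * trace 𝕜 V (J₁ * F)) (d⁻¹ * trace 𝕜 V (J₂ * F)) (-(d⁻¹ * trace 𝕜 V (J₃ * F)))
  simp only [Set.forall_mem_insert, Set.mem_singleton_iff, forall_eq, hP, t₁, t₂, t₃]
  refine ⟨?_, ?_, ?_⟩ <;> field_simp <;> ring

theorem commute_sub_sp1Part (h : IsParaquaternionicTriple J₁ J₂ J₃) (hd : finrank 𝕜 V ≠ 0)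
    {F : Module.End 𝕜 V} (hF₁ : F * J₁ - J₁ * F ∈ Submodule.span 𝕜 {J₁, J₂, J₃})
    (hF₂ : F * J₂ - J₂ * F ∈ Submodule.span 𝕜 {J₁, J₂, J₃})
    (hF₃ : F * J₃ - J₃ * F ∈ Submodule.span 𝕜 {J₁, J₂, J₃}) :
    Commute (F - sp1Part J₁ J₂ J₃ F) J₁ ∧ Commute (F - sp1Part J₁ J₂ J₃ F) J₂ ∧
      Commute (F - sp1Part J₁ J₂ J₃ F) J₃ := by
  have hcomm {J : Module.End 𝕜 V} (hJ : J ∈ ({J₁, J₂, J₃} : Set (Module.End 𝕜 V))) :=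
    h.commute_sub_of_trace_mul_eq hd (sp1Part_mem_span J₁ J₂ J₃ F) (h.trace_mul_sp1Part hd F) hJ
  exact ⟨hcomm (by simp) hF₁, hcomm (by simp) hF₂, hcomm (by simp) hF₃⟩

end FiniteDimensional

end IsParaquaternionicTriple

/-- Proposition 2.1 (pointwise): for a paraquaternionic triple `(J₁, J₂, J₃)` on a real
vector space `V` of dimension `4n` and an endomorphism `F` whose commutator with each `Jₐ`
lies in `span {J₁, J₂, J₃}`, `F` decomposes uniquely as
`F = F' + (1/2n)(ρ₁ J₁ + ρ₂ J₂ + ρ₃ J₃)` with `F'` commuting with each `Jₐ`; moreover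
`ρ₁ = (1/2) tr(J₁ ∘ F)`, `ρ₂ = (1/2) tr(J₂ ∘ F)`, `ρ₃ = −(1/2) tr(J₃ ∘ F)`. -/
theorem curvature_splitting
    {V : Type*} [AddCommGroup V] [Module ℝ V] [FiniteDimensional ℝ V]
    (n : ℕ) (hn : 1 ≤ n) (hdim : Module.finrank ℝ V = 4 * n)
    (J1 J2 J3 : Module.End ℝ V)
    (h1 : J1 * J1 = 1) (h2 : J2 * J2 = 1) (h3 : J3 * J3 = -1)
    (h12 : J1 * J2 = J3) (h21 : J2 * J1 = -J3)
    (F : Module.End ℝ V)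
    (hF1 : F * J1 - J1 * F ∈ Submodule.span ℝ {J1, J2, J3})
    (hF2 : F * J2 - J2 * F ∈ Submodule.span ℝ {J1, J2, J3})
    (hF3 : F * J3 - J3 * F ∈ Submodule.span ℝ {J1, J2, J3}) :
    (∃! q : Module.End ℝ V × ℝ × ℝ × ℝ,
      F = q.1 + ((2 * n : ℝ))⁻¹ • (q.2.1 • J1 + q.2.2.1 • J2 + q.2.2.2 • J3) ∧
      Commute q.1 J1 ∧ Commute q.1 J2 ∧ Commute q.1 J3) ∧
    (∀ (F' : Module.End ℝ V) (ρ1 ρ2 ρ3 : ℝ),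
      F = F' + ((2 * n : ℝ))⁻¹ • (ρ1 • J1 + ρ2 • J2 + ρ3 • J3) →
      Commute F' J1 → Commute F' J2 → Commute F' J3 →
      ρ1 = (1 / 2 : ℝ) * LinearMap.trace ℝ V (J1 * F) ∧
      ρ2 = (1 / 2 : ℝ) * LinearMap.trace ℝ V (J2 * F) ∧
      ρ3 = -(1 / 2 : ℝ) * LinearMap.trace ℝ V (J3 * F)) := by
  have hJ : IsParaquaternionicTriple J1 J2 J3 := ⟨h1, h2, h3, h12, h21⟩
  have hd : finrank ℝ V ≠ 0 := by omega
  refine (and_iff_right_of_imp fun hρ => ?splitting).mpr ?coefficients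
  case coefficients =>
    have hcd : ((2 * n : ℝ))⁻¹ * finrank ℝ V = 2 := by
      rw [hdim]
      field_simp
      push_cast
      ring
    rintro F' ρ1 ρ2 ρ3 rfl hF'1 - hF'3
    simp only [smul_add, smul_smul]
    obtain ⟨t1, t2, t3⟩ := hJ.trace_mul_add_smul hF'1 hF'3 _ _ _
    rw [t1, t2, t3]
    exact ⟨by linear_combination -ρ1 / 2 * hcd, by linear_combination -ρ2 / 2 * hcd,
      by linear_combination -ρ3 / 2 * hcd⟩
  case splitting =>
    have hP : sp1Part J1 J2 J3 F = ((2 * n : ℝ))⁻¹ • (((1 / 2 : ℝ) * trace ℝ V (J1 * F)) • J1 +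
        ((1 / 2 : ℝ) * trace ℝ V (J2 * F)) • J2 + (-(1 / 2 : ℝ) * trace ℝ V (J3 * F)) • J3) := by
      rw [sp1Part, hdim]
      push_cast
      module
    obtain ⟨hc1, hc2, hc3⟩ := hJ.commute_sub_sp1Part hd hF1 hF2 hF3
    refine ⟨(F - sp1Part J1 J2 J3 F, _, _, _), ⟨by rw [← hP, sub_add_cancel], hc1, hc2, hc3⟩, ?_⟩
    rintro ⟨G, s1, s2, s3⟩ ⟨hF, hG1, hG2, hG3⟩
    obtain ⟨rfl, rfl, rfl⟩ := hρ G s1 s2 s3 hF hG1 hG2 hG3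
    exact Prod.ext (by rw [hP]; exact eq_sub_of_add_eq hF.symm) rfl
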